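/- Let X be a nonempty finite set, D a probability distribution on X, g : X → [0,1], δ > 0, and η = δ/2. Let f_1, ..., f_k : X → [-1,1], define h_0 = 0 and h_j(x) = min(1, max(0, η·(f_1(x) + ... + f_j(x)))) for 1 ≤ j ≤ k. If E_{x∼D}[f_j(x)·(g(x) − h_{j−1}(x))] > δ for every j in [k], then k < 2/δ^2. -/
import Mathlib

lemma clamp_key (g u t : ℝ) (hg0 : 0 ≤ g) (hg1 : g ≤ 1) :
    2*t*(g - min 1 (max 0 u)) - t^2 ≤
      ((g - u)^2 - (min 1 (max 0 u) - u)^2)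
      - ((g - (u+t))^2 - (min 1 (max 0 (u+t)) - (u+t))^2) := by
  simp only [max_def, min_def]
  split_ifs <;> nlinarith

lemma clamp_close (g u : ℝ) (hg0 : 0 ≤ g) (hg1 : g ≤ 1) :
    (min 1 (max 0 u) - u)^2 ≤ (g - u)^2 := by
  simp only [max_def, min_def]
  split_ifs <;> nlinarith

theorem stmt_4 {X : Type*} [Fintype X] [Nonempty X]
    (D : X → ℝ) (hD0 : ∀ x, 0 ≤ D x) (hD1 : ∑ x, D x = 1)
    (g : X → ℝ) (hg : ∀ x, g x ∈ Set.Icc (0 : ℝ) 1)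
    (δ η : ℝ) (hδ : 0 < δ) (hη : η = δ / 2)
    (k : ℕ) (f : ℕ → X → ℝ)
    (hf : ∀ j < k, ∀ x, f j x ∈ Set.Icc (-1 : ℝ) 1)
    (h : ℕ → X → ℝ)
    (hh : ∀ j x, h j x = min 1 (max 0 (η * ∑ i ∈ Finset.range j, f i x)))
    (hcorr : ∀ j < k, δ < ∑ x, D x * (f j x * (g x - h j x))) :
    (k : ℝ) < 2 / δ ^ 2 := by
  rcases Nat.eq_zero_or_pos k with hk | hk
  · subst hk; simpa using by positivity
  set s : ℕ → X → ℝ := fun j x => η * ∑ i ∈ Finset.range j, f i x with hs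
  set Φ : ℕ → ℝ :=
    fun j => ∑ x, D x * ((g x - s j x)^2 - (min 1 (max 0 (s j x)) - s j x)^2) with hΦ
  -- per-step gain
  have hstep : ∀ j < k, δ^2/2 < Φ j - Φ (j+1) := by
    intro j hj
    have hsumx : ∀ x, s (j+1) x = s j x + η * f j x := by
      intro x; simp [hs, Finset.sum_range_succ, mul_add]
    have hptwise : ∀ x,
        D x * (2*(η * f j x)*(g x - h j x) - (η * f j x)^2)
          ≤ D x * ((g x - s j x)^2 - (min 1 (max 0 (s j x)) - s j x)^2)
            - D x * ((g x - s (j+1) x)^2 - (min 1 (max 0 (s (j+1) x)) - s (j+1) x)^2) := by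
      intro x
      have hk1 := clamp_key (g x) (s j x) (η * f j x) (hg x).1 (hg x).2
      rw [hh j x] at *
      rw [hsumx x]
      have := hD0 x
      nlinarith [hk1]
    have hΦdiff : Φ j - Φ (j+1)
        ≥ ∑ x, D x * (2*(η * f j x)*(g x - h j x) - (η * f j x)^2) := by
      rw [hΦ]
      rw [← Finset.sum_sub_distrib]
      exact Finset.sum_le_sum fun x _ => hptwise x
    have hsplit : ∑ x, D x * (2*(η * f j x)*(g x - h j x) - (η * f j x)^2)
        = 2*η * (∑ x, D x * (f j x * (g x - h j x))) - η^2 * ∑ x, D x * (f j x)^2 := by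
      rw [Finset.mul_sum, Finset.mul_sum, ← Finset.sum_sub_distrib]
      exact Finset.sum_congr rfl fun x _ => by ring
    have hf2 : ∑ x, D x * (f j x)^2 ≤ 1 := by
      rw [← hD1]
      refine Finset.sum_le_sum fun x _ => ?_
      have h1 := (hf j hj x).1
      have h2 := (hf j hj x).2
      nlinarith [mul_nonneg (hD0 x) (by nlinarith : (0:ℝ) ≤ 1 - f j x ^ 2)]
    have hcor := hcorr j hj
    have hηpos : 0 < η := by rw [hη]; linarith
    have : 2*η * (∑ x, D x * (f j x * (g x - h j x))) - η^2 * ∑ x, D x * (f j x)^2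
        > 2*η*δ - η^2 := by
      have h1 : 2*η*δ < 2*η * (∑ x, D x * (f j x * (g x - h j x))) := by
        have := mul_lt_mul_of_pos_left hcor (by linarith : (0:ℝ) < 2*η)
        linarith
      have h2 : η^2 * ∑ x, D x * (f j x)^2 ≤ η^2 := by
        nlinarith [sq_nonneg η]
      linarith
    have : δ^2/2 < 2*η*δ - η^2 := by rw [hη]; nlinarith
    linarith [hΦdiff, hsplit ▸ ‹2*η * (∑ x, D x * (f j x * (g x - h j x))) - η^2 * ∑ x, D x * (f j x)^2 > 2*η*δ - η^2›]
  -- telescoping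
  have htel : (k : ℝ) * (δ^2/2) < Φ 0 - Φ k := by
    have := Finset.sum_range_sub' (f := Φ) k
    calc (k : ℝ) * (δ^2/2) = ∑ _j ∈ Finset.range k, δ^2/2 := by
          simp [mul_comm]
      _ < ∑ j ∈ Finset.range k, (Φ j - Φ (j+1)) := by
          refine Finset.sum_lt_sum_of_nonempty (Finset.nonempty_range_iff.mpr hk.ne') ?_
          intro j hj
          exact hstep j (Finset.mem_range.mp hj)
      _ = Φ 0 - Φ k := this
  have hΦ0 : Φ 0 ≤ 1 := by
    rw [hΦ]
    refine le_trans (Finset.sum_le_sum fun x _ => ?_) (le_of_eq hD1)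
    have : s 0 x = 0 := by simp [hs]
    rw [this]
    have h1 := (hg x).1
    have h2 := (hg x).2
    have : min (1:ℝ) (max 0 0) = 0 := by norm_num
    rw [this]
    nlinarith [mul_nonneg (hD0 x) (by nlinarith : (0:ℝ) ≤ 1 - g x ^ 2)]
  have hΦk : 0 ≤ Φ k := by
    rw [hΦ]
    refine Finset.sum_nonneg fun x _ => ?_
    have := clamp_close (g x) (s k x) (hg x).1 (hg x).2
    have := hD0 x
    nlinarith
  have hfin : (k : ℝ) * (δ^2/2) < 1 := by linarith
  rw [lt_div_iff₀ (by positivity : (0:ℝ) < δ ^ 2)]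
  nlinarith
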